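/- arXiv:1306.3788 — 6 statements merged into one kernel-verified Lean document; each statement's English description precedes it below -/
import Mathlib

section
/- If a divisibility | on a commutative ring A admits cancellation (i.e., 0∤c and ac|bc imply a|b), then the support I(|) = {a : 0|a} is a prime ideal of A. -/
def IsDivisibility {A : Type*} [CommRing A] (D : A → A → Prop) : Prop :=
  (∀ a, D a a) ∧ (∀ a b c : A, D a b → D b c → D a c) ∧
  (∀ a b c : A, D a b → D a c → D a (b - c)) ∧
  (∀ a b c : A, D a b → D (a * c) (b * c)) ∧ ¬ D 0 1

theorem IsDivisibility.not_zero_one {A : Type*} [CommRing A] {D : A → A → Prop}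
    (hD : IsDivisibility D) : ¬ D 0 1 :=
  hD.2.2.2.2

theorem zero_rel_or_of_zero_rel_mul {A : Type*} [CommRing A] {D : A → A → Prop}
    (hcanc : ∀ a b c : A, ¬ D 0 c → D (a * c) (b * c) → D a b) {a b : A}
    (hab : D 0 (a * b)) : D 0 a ∨ D 0 b :=
  or_iff_not_imp_right.2 fun hb => hcanc 0 a b hb (by rwa [zero_mul])

theorem stmt_2 {A : Type*} [CommRing A] (D : A → A → Prop) (hD : IsDivisibility D)
    (hcanc : ∀ a b c : A, ¬ D 0 c → D (a * c) (b * c) → D a b)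
    (I : Ideal A) (hI : ∀ a, a ∈ I ↔ D 0 a) :
    I.IsPrime := by
  refine Ideal.isPrime_iff.2 ⟨?_, fun {a b} hab => ?_⟩
  · exact (Ideal.ne_top_iff_one I).2 fun h1 => hD.not_zero_one ((hI 1).1 h1)
  · simp only [hI] at hab ⊢
    exact zero_rel_or_of_zero_rel_mul hcanc hab
end

section
/- Let A be an integral domain with fraction field F, and let | be a divisibility on A with cancellation and support I(|) = {0}. Then B := {b/a : a, b ∈ A, a ≠ 0, a|b} ∪ {0} is a subring of F. -/
namespace IsDivisibility

variable {A : Type*} [CommRing A] {D : A → A → Prop}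

theorem refl (hD : IsDivisibility D) (a : A) : D a a := hD.1 a

theorem trans (hD : IsDivisibility D) {a b c : A} : D a b → D b c → D a c := hD.2.1 a b c

theorem sub (hD : IsDivisibility D) {a b c : A} : D a b → D a c → D a (b - c) := hD.2.2.1 a b c

theorem mul_right (hD : IsDivisibility D) {a b : A} (c : A) : D a b → D (a * c) (b * c) :=
  hD.2.2.2.1 a b c

theorem mul_left (hD : IsDivisibility D) {a b : A} (c : A) (hab : D a b) : D (c * a) (c * b) := by
  simpa only [mul_comm c] using hD.mul_right c hab

theorem dvd_zero (hD : IsDivisibility D) (a : A) : D a 0 := by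
  simpa only [sub_self] using hD.sub (hD.refl a) (hD.refl a)

theorem neg (hD : IsDivisibility D) {a b : A} (hab : D a b) : D a (-b) := by
  simpa only [zero_sub] using hD.sub (hD.dvd_zero a) hab

theorem add (hD : IsDivisibility D) {a b c : A} (hab : D a b) (hac : D a c) : D a (b + c) := by
  simpa only [sub_neg_eq_add] using hD.sub hab (hD.neg hac)

theorem mul_mul (hD : IsDivisibility D) {a b c d : A} (hab : D a b) (hcd : D c d) :
    D (a * c) (b * d) :=
  hD.trans (hD.mul_right c hab) (hD.mul_left b hcd)

/-- The numerator of `b / a + d / c` over the denominator `a * c`. -/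
theorem mul_add_mul (hD : IsDivisibility D) {a b c d : A} (hab : D a b) (hcd : D c d) :
    D (a * c) (b * c + a * d) :=
  hD.add (hD.mul_right c hab) (hD.mul_left a hcd)

end IsDivisibility

section Quotients

variable {A : Type*} [CommRing A] (D : A → A → Prop) (F : Type*) [Field F] [Algebra A F]

def divisibilityQuotients : Set F :=
  {x : F | x = 0 ∨ ∃ a b : A, a ≠ 0 ∧ D a b ∧ x = algebraMap A F b / algebraMap A F a}

variable {D F}

theorem zero_mem_divisibilityQuotients : (0 : F) ∈ divisibilityQuotients D F := Or.inl rfl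

theorem one_mem_divisibilityQuotients [Nontrivial A] (hD : IsDivisibility D) :
    (1 : F) ∈ divisibilityQuotients D F :=
  Or.inr ⟨1, 1, one_ne_zero, hD.refl 1, by simp⟩

theorem neg_mem_divisibilityQuotients (hD : IsDivisibility D) {x : F}
    (hx : x ∈ divisibilityQuotients D F) : -x ∈ divisibilityQuotients D F := by
  rcases hx with rfl | ⟨a, b, ha, hab, rfl⟩
  · simp [zero_mem_divisibilityQuotients]
  · exact Or.inr ⟨a, -b, ha, hD.neg hab, by rw [map_neg, neg_div]⟩

theorem mul_mem_divisibilityQuotients [NoZeroDivisors A] (hD : IsDivisibility D) {x y : F}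
    (hx : x ∈ divisibilityQuotients D F) (hy : y ∈ divisibilityQuotients D F) :
    x * y ∈ divisibilityQuotients D F := by
  rcases hx with rfl | ⟨a, b, ha, hab, rfl⟩
  · simp [zero_mem_divisibilityQuotients]
  rcases hy with rfl | ⟨c, d, hc, hcd, rfl⟩
  · simp [zero_mem_divisibilityQuotients]
  exact Or.inr ⟨a * c, b * d, mul_ne_zero ha hc, hD.mul_mul hab hcd,
    by rw [map_mul, map_mul, div_mul_div_comm]⟩

theorem add_mem_divisibilityQuotients [NoZeroDivisors A] (hD : IsDivisibility D)
    (hinj : Function.Injective (algebraMap A F)) {x y : F}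
    (hx : x ∈ divisibilityQuotients D F) (hy : y ∈ divisibilityQuotients D F) :
    x + y ∈ divisibilityQuotients D F := by
  rcases hx with rfl | ⟨a, b, ha, hab, rfl⟩
  · simpa using hy
  rcases hy with rfl | ⟨c, d, hc, hcd, rfl⟩
  · rw [add_zero]
    exact Or.inr ⟨a, b, ha, hab, rfl⟩
  refine Or.inr ⟨a * c, b * c + a * d, mul_ne_zero ha hc, hD.mul_add_mul hab hcd, ?_⟩
  have ha' : algebraMap A F a ≠ 0 := (map_ne_zero_iff _ hinj).mpr ha
  have hc' : algebraMap A F c ≠ 0 := (map_ne_zero_iff _ hinj).mpr hc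
  rw [div_add_div _ _ ha' hc', map_add, map_mul, map_mul, map_mul]

def divisibilitySubring [IsDomain A] (hD : IsDivisibility D)
    (hinj : Function.Injective (algebraMap A F)) : Subring F where
  carrier := divisibilityQuotients D F
  zero_mem' := zero_mem_divisibilityQuotients
  one_mem' := one_mem_divisibilityQuotients hD
  neg_mem' := neg_mem_divisibilityQuotients hD
  mul_mem' := mul_mem_divisibilityQuotients hD
  add_mem' := add_mem_divisibilityQuotients hD hinj

end Quotients

theorem stmt_3_general {A F : Type*} [CommRing A] [IsDomain A] [Field F] [Algebra A F]
    [IsFractionRing A F] (D : A → A → Prop) (hD : IsDivisibility D) :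
    ∃ S : Subring F, (S : Set F) =
      {x : F | x = 0 ∨ ∃ a b : A, a ≠ 0 ∧ D a b ∧
        x = algebraMap A F b / algebraMap A F a} :=
  ⟨divisibilitySubring hD (IsFractionRing.injective A F), rfl⟩

theorem stmt_3 {A F : Type*} [CommRing A] [IsDomain A] [Field F] [Algebra A F]
    [IsFractionRing A F] (D : A → A → Prop) (hD : IsDivisibility D)
    (hcanc : ∀ a b c : A, ¬ D 0 c → D (a * c) (b * c) → D a b)
    (hsupp : ∀ a : A, D 0 a → a = 0) :
    ∃ S : Subring F, (S : Set F) =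
      {x : F | x = 0 ∨ ∃ a b : A, a ≠ 0 ∧ D a b ∧
        x = algebraMap A F b / algebraMap A F a} :=
  stmt_3_general D hD
end

section
/- Let F be a field of characteristic 0 and B a subring of F containing the ring ℤ[γ(F)] generated by all values γ(x) = (1/p)·(x^p − x)/((x^p − x)² − 1) for x ∈ F. If p⁻¹ ∉ B, then B is contained in the valuation ring O_v of some p-valuation v on F. -/
/-- `x` lies in the maximal ideal of the valuation subring `O`. -/
def MemMaxIdeal {F : Type*} [Field F] (O : ValuationSubring F) (x : F) : Prop :=
  x ∈ O ∧ (x = 0 ∨ x⁻¹ ∉ O)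

/-- `O` is the valuation ring of a `p`-valuation on `F`: `p` lies in the maximal
ideal, `v p` is the minimal positive value, and the residue field is `𝔽_p`. -/
def IsPValuationRing (p : ℕ) {F : Type*} [Field F] (O : ValuationSubring F) : Prop :=
  MemMaxIdeal O (p : F) ∧
  (∀ x : F, MemMaxIdeal O x → x / (p : F) ∈ O) ∧
  (∀ x : F, x ∈ O → ∃ n : Fin p, MemMaxIdeal O (x - (n : ℕ)))

/-!
Since `p` is not a unit of `B`, some valuation ring `O ⊇ B` has `p` in its maximal ideal. The
identity `(x ^ p - x) / p = γ(x) * ((x ^ p - x) ^ 2 - 1)` gives `x ^ p ≡ x` modulo `p O` for every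
`x ∈ O`. The degenerate case `x ^ p - x = ε = ±1` is ruled out by applying this to `x ^ 2`:
it gives `2 ε x + 1 ≡ 0`, and applying Frobenius to this congruence yields `2 ≡ 0`, hence `1 ≡ 0`.
Hence every residue is a root of `X ^ p - X`, so the residue field is `𝔽_p`. For `x` in the
maximal ideal, `x ^ (p - 1) - 1` is a unit, so `x ^ p - x ∈ p O` forces `x ∈ p O`: the value of `p`
is the least positive one.
-/

def kochenOperator (p : ℕ) {F : Type*} [Field F] (x : F) : F :=
  (1 / (p : F)) * (x ^ p - x) / ((x ^ p - x) ^ 2 - 1)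

section CharP

variable {k : Type*} [Field k] {p : ℕ} [Fact p.Prime] [CharP k p]

theorem exists_fin_natCast_eq_of_pow_eq_self {a : k} (ha : a ^ p = a) :
    ∃ n : Fin p, ((n : ℕ) : k) = a := by
  obtain ⟨n, rfl⟩ : a ∈ (ZMod.castHom (dvd_refl p) k).fieldRange := by
    rw [ZMod.fieldRange_castHom_eq_bot]
    exact (Subfield.mem_bot_iff_pow_eq_self k p).2 ha
  exact ⟨⟨n.val, n.val_lt⟩, ZMod.natCast_val n⟩

theorem two_mul_mul_add_one_ne_zero_of_pow_eq_add {x e : k} (he : e ^ 2 = 1)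
    (hx : x ^ p = x + e) : 2 * e * x + 1 ≠ 0 := by
  intro h
  have hep : e ^ p = e := by
    rcases sq_eq_one_iff.1 he with rfl | rfl
    · exact one_pow p
    · exact neg_one_pow_char k p
  have hfrob : 2 * e * (x + e) + 1 = 0 := by
    simpa only [map_add, map_mul, map_one, map_zero, map_ofNat, frobenius_def, hep, hx] using
      congrArg (frobenius k p) h
  have h2 : (2 : k) = 0 := by linear_combination hfrob - h - 2 * he
  exact one_ne_zero (by linear_combination h - e * x * h2)

end CharP

section

open IsLocalRing

variable {F : Type*} [Field F]

namespace ValuationSubring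

variable {O : ValuationSubring F}

theorem memMaxIdeal_iff_mem_nonunits {x : F} : MemMaxIdeal O x ↔ x ∈ O.nonunits := by
  rw [MemMaxIdeal, mem_nonunits_iff_or]
  exact ⟨And.right, fun h ↦ ⟨nonunits_subset ((mem_nonunits_iff_or O).2 h), h⟩⟩

theorem residue_eq_zero_iff {a : O} : residue O a = 0 ↔ (a : F) ∈ O.nonunits :=
  (IsLocalRing.residue_eq_zero_iff a).trans coe_mem_nonunits_iff.symm

theorem mul_mem_nonunits {x y : F} (hx : x ∈ O) (hy : y ∈ O.nonunits) : x * y ∈ O.nonunits := by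
  rw [mem_nonunits_iff, map_mul]
  exact (mul_le_of_le_one_left' ((valuation_le_one_iff O x).2 hx)).trans_lt hy

theorem mem_nonunits_of_div_mem {x c : F} (hc0 : c ≠ 0) (hc : c ∈ O.nonunits) (h : x / c ∈ O) :
    x ∈ O.nonunits := by
  simpa [hc0] using mul_mem_nonunits h hc

end ValuationSubring

theorem Subring.exists_valuationSubring_mem_nonunits {B : Subring F} {x : F} (hx : x ∈ B)
    (hinv : x⁻¹ ∉ B) : ∃ O : ValuationSubring F, B ≤ O.toSubring ∧ x ∈ O.nonunits := by
  have hI : Ideal.span {(⟨x, hx⟩ : B)} ≠ ⊤ := by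
    rw [Ne, Ideal.span_singleton_eq_top, isUnit_iff_exists_inv]
    rintro ⟨b, hb⟩
    exact hinv (eq_inv_of_mul_eq_one_right congr(($hb).1) ▸ b.2)
  obtain ⟨O, hBO, hO⟩ := Ideal.image_subset_nonunits_valuationSubring _ hI
  exact ⟨O, hBO, hO ⟨_, Ideal.mem_span_singleton_self _, rfl⟩⟩

variable {p : ℕ}

theorem pow_sub_self_div_eq_kochenOperator_mul {x : F} (h : (x ^ p - x) ^ 2 ≠ 1) :
    (x ^ p - x) / p = kochenOperator p x * ((x ^ p - x) ^ 2 - 1) := by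
  rw [kochenOperator, div_mul_cancel₀ _ (sub_ne_zero.2 h), one_div_mul_eq_div]

theorem Subring.pow_sub_self_div_mem {R : Subring F} (hγ : ∀ y, kochenOperator p y ∈ R)
    {x : F} (hx : x ∈ R) (h : (x ^ p - x) ^ 2 ≠ 1) : (x ^ p - x) / p ∈ R := by
  rw [pow_sub_self_div_eq_kochenOperator_mul h]
  exact mul_mem (hγ x) (sub_mem (pow_mem (sub_mem (pow_mem hx p) hx) 2) (one_mem R))

namespace ValuationSubring

variable {O : ValuationSubring F}

theorem charP_residueField (hp : p.Prime) (hpO : (p : F) ∈ O.nonunits) :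
    CharP (ResidueField O) p :=
  (CharP.charP_iff_prime_eq_zero hp).2 <| by
    rw [← map_natCast (residue O), residue_eq_zero_iff]
    simpa using hpO

theorem residue_pow_sub_self_eq_zero (hp0 : (p : F) ≠ 0) (hpO : (p : F) ∈ O.nonunits)
    (hγ : ∀ y, kochenOperator p y ∈ O) (a : O) (h : ((a : F) ^ p - a) ^ 2 ≠ 1) :
    residue O (a ^ p - a) = 0 := by
  rw [residue_eq_zero_iff]
  push_cast
  exact mem_nonunits_of_div_mem hp0 hpO (Subring.pow_sub_self_div_mem (R := O.toSubring) hγ a.2 h)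

theorem pow_sub_self_sq_ne_one [CharZero F] (hp : p.Prime) (hpO : (p : F) ∈ O.nonunits)
    (hγ : ∀ y, kochenOperator p y ∈ O) (a : O) : ((a : F) ^ p - a) ^ 2 ≠ 1 := by
  intro hdeg
  have := Fact.mk hp
  have := charP_residueField hp hpO
  set ε : O := a ^ p - a with hε_def
  have hε : ε ^ 2 = 1 := Subtype.ext (by push_cast; exact hdeg)
  have ha0 : (a : F) ≠ 0 := by
    intro h
    rw [h, zero_pow hp.ne_zero] at hdeg
    simp at hdeg
  have hap : a ^ p = a + ε := by rw [hε_def]; ring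
  have hsq : (a ^ 2) ^ p - a ^ 2 = 2 * ε * a + 1 := by
    rw [← pow_mul, mul_comm, pow_mul, hap]
    linear_combination hε
  have hnd : (((a ^ 2 : O) : F) ^ p - (a ^ 2 : O)) ^ 2 ≠ 1 := by
    have hfac : ((a ^ 2) ^ p - a ^ 2) ^ 2 - 1 = 4 * a * a ^ p := by
      rw [hsq, hap]
      linear_combination 4 * a ^ 2 * hε
    intro h
    have := congrArg ((↑) : O → F) hfac
    push_cast at h this
    rw [h, sub_self] at this
    simp [ha0, hp.ne_zero] at this
  have h := residue_pow_sub_self_eq_zero (Nat.cast_ne_zero.2 hp.ne_zero) hpO hγ _ hnd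
  rw [hsq, map_add, map_mul, map_mul, map_one, map_ofNat] at h
  refine two_mul_mul_add_one_ne_zero_of_pow_eq_add (p := p) (x := residue O a) ?_ ?_ h
  · rw [← map_pow, hε, map_one]
  · rw [← map_pow, ← map_add, hap]

theorem residue_pow_eq_self [CharZero F] (hp : p.Prime) (hpO : (p : F) ∈ O.nonunits)
    (hγ : ∀ y, kochenOperator p y ∈ O) (a : O) : residue O a ^ p = residue O a := by
  have h := residue_pow_sub_self_eq_zero (Nat.cast_ne_zero.2 hp.ne_zero) hpO hγ a
    (pow_sub_self_sq_ne_one hp hpO hγ a)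
  rwa [map_sub, map_pow, sub_eq_zero] at h

theorem div_natCast_mem_of_mem_nonunits [CharZero F] (hp : p.Prime) (hpO : (p : F) ∈ O.nonunits)
    (hγ : ∀ y, kochenOperator p y ∈ O) {x : F} (hx : x ∈ O.nonunits) : x / p ∈ O := by
  have hxO : x ∈ O := nonunits_subset hx
  have hpow : x ^ (p - 1) ∈ O.nonunits := by
    rw [← Nat.sub_add_cancel (Nat.le_sub_of_add_le hp.two_le), pow_succ]
    exact mul_mem_nonunits (pow_mem hxO _) hx
  have hunit : O.valuation (x ^ (p - 1) - 1) = 1 := by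
    rw [Valuation.map_sub_swap, Valuation.map_one_sub_of_lt _ hpow]
  have hfac : x / p * (x ^ (p - 1) - 1) = (x ^ p - x) / p := by
    rw [div_mul_eq_mul_div, mul_sub, mul_one, ← pow_succ', Nat.sub_add_cancel hp.one_le]
  have hdiv := Subring.pow_sub_self_div_mem (R := O.toSubring) hγ hxO
    (pow_sub_self_sq_ne_one hp hpO hγ ⟨x, hxO⟩)
  rw [mem_toSubring, ← valuation_le_one_iff, ← hfac, map_mul, hunit, mul_one] at hdiv
  exact (valuation_le_one_iff O _).1 hdiv

theorem exists_fin_sub_natCast_mem_nonunits [CharZero F] (hp : p.Prime)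
    (hpO : (p : F) ∈ O.nonunits) (hγ : ∀ y, kochenOperator p y ∈ O) {x : F} (hx : x ∈ O) :
    ∃ n : Fin p, x - (n : ℕ) ∈ O.nonunits := by
  have := Fact.mk hp
  have := charP_residueField hp hpO
  obtain ⟨n, hn⟩ := exists_fin_natCast_eq_of_pow_eq_self (residue_pow_eq_self hp hpO hγ ⟨x, hx⟩)
  refine ⟨n, ?_⟩
  have h : residue O (⟨x, hx⟩ - (n : ℕ)) = 0 := by rw [map_sub, map_natCast, hn, sub_self]
  simpa using residue_eq_zero_iff.1 h

end ValuationSubring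

end

theorem stmt_7 (p : ℕ) (hp : p.Prime) {F : Type*} [Field F] [CharZero F]
    (B : Subring F)
    (hKochen : ∀ x : F, (1 / (p : F)) * (x ^ p - x) / ((x ^ p - x) ^ 2 - 1) ∈ B)
    (hpB : (p : F)⁻¹ ∉ B) :
    ∃ O : ValuationSubring F, IsPValuationRing p O ∧ B ≤ O.toSubring := by
  obtain ⟨O, hBO, hpO⟩ := Subring.exists_valuationSubring_mem_nonunits (natCast_mem B p) hpB
  have hγ : ∀ y, kochenOperator p y ∈ O := fun y ↦ hBO (hKochen y)
  refine ⟨O, ?_, hBO⟩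
  simp only [IsPValuationRing, ValuationSubring.memMaxIdeal_iff_mem_nonunits]
  exact ⟨hpO, fun x hx ↦ ValuationSubring.div_natCast_mem_of_mem_nonunits hp hpO hγ hx,
    fun x hx ↦ ValuationSubring.exists_fin_sub_natCast_mem_nonunits hp hpO hγ hx⟩
end

section
/- Let A be an integral domain with ℚ ⊆ A and F = Quot(A). Then there is a 1-1 correspondence between p-valuation rings B ⊆ F (valuation rings of p-valuations of F) and total p-divisibilities | of A having cancellation and support I(|) = {0}, given by a|b ⟺ a = 0 or b/a ∈ B. -/
def IsPDivisibility (p : ℕ) {A : Type*} [CommRing A] (D : A → A → Prop) : Prop :=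
  IsDivisibility D ∧
  (∀ a : A, ¬ D 0 a → ¬ D ((p : A) * a) a) ∧
  (∀ a b : A, D ((p : A) * ((a ^ p * b - b ^ p * a) ^ 2 - (b ^ (p + 1)) ^ 2))
      ((a ^ p * b - b ^ p * a) * b ^ (p + 1)))

/-- The divisibility on `A` induced by a subring of the fraction field `F`. -/
def ringDiv {A F : Type*} [CommRing A] [Field F] [Algebra A F]
    (O : ValuationSubring F) (a b : A) : Prop :=
  (a = 0 ∧ b = 0) ∨ (a ≠ 0 ∧ algebraMap A F b / algebraMap A F a ∈ O)

section Divisibility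

variable {A : Type*} [CommRing A] {D : A → A → Prop}

theorem IsDivisibility.dvd_zero_s8 (hD : IsDivisibility D) (a : A) : D a 0 := by
  simpa using hD.2.2.1 a a a (hD.1 a) (hD.1 a)

theorem IsDivisibility.dvd_neg (hD : IsDivisibility D) {a b : A} (hab : D a b) : D a (-b) := by
  simpa using hD.2.2.1 a 0 b (hD.dvd_zero_s8 a) hab

theorem IsDivisibility.dvd_add (hD : IsDivisibility D) {a b c : A} (hab : D a b) (hac : D a c) :
    D a (b + c) := by
  simpa using hD.2.2.1 a b (-c) hab (hD.dvd_neg hac)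

theorem IsDivisibility.mul_dvd_mul (hD : IsDivisibility D) {a b c d : A} (hab : D a b)
    (hcd : D c d) : D (a * c) (b * d) :=
  hD.2.1 _ _ _ (hD.2.2.2.1 a b c hab) (by simpa [mul_comm] using hD.2.2.2.1 c d b hcd)

end Divisibility

section Valuation

variable {F : Type*} [Field F]

/-- For `t = z ^ p - z`, the valuation form of "the Kochen operator `t / (p (t² - 1))` lies in `O`".
Unlike that membership it fails when `t² = 1`, where the division is by zero. -/
def KochenBound (p : ℕ) (O : ValuationSubring F) (t : F) : Prop :=
  O.valuation t ≤ O.valuation (p : F) * O.valuation (t ^ 2 - 1)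

variable (O : ValuationSubring F) {p : ℕ}

theorem memMaxIdeal_iff_valuation_lt_one {x : F} : MemMaxIdeal O x ↔ O.valuation x < 1 := by
  rw [MemMaxIdeal, ← O.valuation_le_one_iff, ← O.valuation_le_one_iff, map_inv₀]
  rcases eq_or_ne x 0 with rfl | hx
  · simp
  · have hv : 0 < O.valuation x := zero_lt_iff.2 ((Valuation.ne_zero_iff _).2 hx)
    rw [inv_le_one₀ hv]
    simp only [hx, false_or]
    exact ⟨fun h => lt_of_le_not_ge h.1 h.2, fun h => ⟨h.le, not_le.2 h⟩⟩

theorem isPValuationRing_iff (hpF : (p : F) ≠ 0) :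
    IsPValuationRing p O ↔ O.valuation (p : F) < 1 ∧
      (∀ x : F, O.valuation x < 1 → O.valuation x ≤ O.valuation (p : F)) ∧
      ∀ x ∈ O, ∃ n : Fin p, O.valuation (x - (n : ℕ)) < 1 := by
  have hvp : 0 < O.valuation (p : F) := zero_lt_iff.2 ((Valuation.ne_zero_iff _).2 hpF)
  simp only [IsPValuationRing, memMaxIdeal_iff_valuation_lt_one, ← O.valuation_le_one_iff,
    map_div₀, div_le_one₀ hvp]

theorem exists_fin_valuation_sub_lt_one_iff (hp : p.Prime) (hvp : O.valuation (p : F) < 1)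
    {x : F} (hx : x ∈ O) :
    (∃ n : Fin p, O.valuation (x - (n : ℕ)) < 1) ↔ O.valuation (x ^ p - x) < 1 := by
  -- Both sides say that the residue of `x` lies in the prime field, whose elements are the
  -- roots of `X ^ p - X`.
  have : Fact p.Prime := ⟨hp⟩
  have hres : ∀ y : O, O.valuation (y : F) < 1 ↔ IsLocalRing.residue O y = 0 := fun y => by
    rw [← O.valuation_lt_one_iff, IsLocalRing.residue_eq_zero_iff]
  have : CharP (IsLocalRing.ResidueField O) p := by
    rw [CharP.charP_iff_prime_eq_zero hp, ← map_natCast (IsLocalRing.residue O), ← hres]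
    simpa using hvp
  set X : O := ⟨x, hx⟩
  have hsub (n : ℕ) : x - n = ((X - n : O) : F) := by push_cast; rfl
  have hpow : x ^ p - x = ((X ^ p - X : O) : F) := by push_cast; rfl
  simp only [hsub, hpow, hres, map_sub, map_pow, map_natCast, sub_eq_zero,
    ← Subfield.mem_bot_iff_pow_eq_self, ← ZMod.fieldRange_castHom_eq_bot p]
  constructor
  · rintro ⟨n, hn⟩
    exact ⟨n, by simp [hn]⟩
  · rintro ⟨m, hm⟩
    exact ⟨⟨m.val, m.val_lt⟩, by simp [← hm, ZMod.natCast_val]⟩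

theorem kochenBound_of_valuation_ne_one
    (hmin : ∀ x : F, O.valuation x < 1 → O.valuation x ≤ O.valuation (p : F))
    {t : F} (ht : O.valuation t ≠ 1) : KochenBound p O t := by
  rcases ht.lt_or_gt with ht | ht
  · have hsq : O.valuation (t ^ 2) < 1 := by
      rw [map_pow]
      exact pow_lt_one₀ zero_le ht two_ne_zero
    rw [KochenBound, ← neg_sub, Valuation.map_neg, Valuation.map_one_sub_of_lt _ hsq, mul_one]
    exact hmin t ht
  · have ht0 : O.valuation t ≠ 0 := (zero_lt_one.trans ht).ne'
    have hsq : O.valuation (t ^ 2 - 1) = O.valuation t ^ 2 := by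
      rw [Valuation.map_sub_eq_of_lt_left, map_pow]
      rw [map_one, map_pow]
      exact one_lt_pow₀ ht two_ne_zero
    have hinv : O.valuation t⁻¹ ≤ O.valuation (p : F) := by
      refine hmin _ ?_
      rw [map_inv₀]
      exact inv_lt_one_of_one_lt₀ ht
    rw [KochenBound, hsq]
    calc O.valuation t = O.valuation t⁻¹ * O.valuation t ^ 2 := by
          rw [map_inv₀, sq, inv_mul_cancel_left₀ ht0]
      _ ≤ O.valuation (p : F) * O.valuation t ^ 2 := mul_le_mul_left hinv _

theorem valuation_pow_sub_self_ne_one (hp : p.Prime) (hvp : O.valuation (p : F) < 1)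
    (hres : ∀ x ∈ O, ∃ n : Fin p, O.valuation (x - (n : ℕ)) < 1) (z : F) :
    O.valuation (z ^ p - z) ≠ 1 := by
  by_cases hz : z ∈ O
  · exact ((exists_fin_valuation_sub_lt_one_iff O hp hvp hz).1 (hres z hz)).ne
  · rw [← O.valuation_le_one_iff, not_le] at hz
    rw [Valuation.map_sub_eq_of_lt_left, map_pow]
    · exact (one_lt_pow₀ hz hp.ne_zero).ne'
    · rw [map_pow]
      exact lt_self_pow₀ hz hp.one_lt

theorem valuation_le_of_kochenBound {t : F} (ht : t ∈ O) (hK : KochenBound p O t) :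
    O.valuation t ≤ O.valuation (p : F) := by
  have h : O.valuation (t ^ 2 - 1) ≤ 1 :=
    (O.valuation_le_one_iff _).2 (sub_mem (pow_mem ht 2) (one_mem O))
  calc O.valuation t ≤ O.valuation (p : F) * O.valuation (t ^ 2 - 1) := hK
    _ ≤ O.valuation (p : F) := mul_le_of_le_one_right' h

theorem valuation_le_of_forall_kochenBound (hp : p.Prime) (hpF : (p : F) ≠ 0)
    (hK : ∀ z : F, KochenBound p O (z ^ p - z)) {x : F} (hx : O.valuation x < 1) :
    O.valuation x ≤ O.valuation (p : F) := by
  by_contra! hpx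
  have hvp : 0 < O.valuation (p : F) := zero_lt_iff.2 ((Valuation.ne_zero_iff _).2 hpF)
  have hvx : 0 < O.valuation x := hvp.trans hpx
  set z : F := p / x
  have hvz : O.valuation z = O.valuation (p : F) / O.valuation x := map_div₀ _ _ _
  have hz1 : O.valuation z < 1 := by rwa [hvz, div_lt_one₀ hvx]
  have hz0 : 0 < O.valuation z := by rw [hvz]; exact div_pos hvp hvx
  have hzp : O.valuation (z ^ p - z) = O.valuation z := by
    refine Valuation.map_sub_eq_of_lt_right _ ?_
    rw [map_pow]
    exact pow_lt_self_of_lt_one₀ hz0 hz1 hp.one_lt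
  have hzO : z ^ p - z ∈ O :=
    sub_mem (pow_mem (O.mem_of_valuation_le_one _ hz1.le) p) (O.mem_of_valuation_le_one _ hz1.le)
  have := valuation_le_of_kochenBound O hzO (hK z)
  rw [hzp, hvz, div_le_iff₀ hvx] at this
  exact hx.not_ge (le_of_mul_le_mul_left (by simpa using this) hvp)

theorem kochenBound_div_iff {u w : F} (hw : w ≠ 0) :
    KochenBound p O (u / w) ↔ O.valuation (u * w) ≤ O.valuation (p * (u ^ 2 - w ^ 2)) := by
  have hw2 : 0 < O.valuation w ^ 2 :=
    pow_pos (zero_lt_iff.2 ((Valuation.ne_zero_iff _).2 hw)) 2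
  have hnum : u * w = u / w * w ^ 2 := by field_simp
  have hden : (p : F) * (u ^ 2 - w ^ 2) = p * ((u / w) ^ 2 - 1) * w ^ 2 := by field_simp
  rw [hnum, hden, map_mul, map_mul, map_pow, mul_le_mul_iff_left₀ hw2, KochenBound, map_mul]

theorem isPValuationRing_iff_kochenBound (hp : p.Prime) (hpF : (p : F) ≠ 0) :
    IsPValuationRing p O ↔
      O.valuation (p : F) < 1 ∧ ∀ z : F, KochenBound p O (z ^ p - z) := by
  rw [isPValuationRing_iff O hpF]
  refine ⟨fun ⟨hvp, hmin, hres⟩ => ⟨hvp, fun z => ?_⟩, fun ⟨hvp, hK⟩ => ⟨hvp, ?_, ?_⟩⟩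
  · exact kochenBound_of_valuation_ne_one O hmin (valuation_pow_sub_self_ne_one O hp hvp hres z)
  · exact fun x => valuation_le_of_forall_kochenBound O hp hpF hK
  · intro x hx
    rw [exists_fin_valuation_sub_lt_one_iff O hp hvp hx]
    exact (valuation_le_of_kochenBound O (sub_mem (pow_mem hx p) hx) (hK x)).trans_lt hvp

end Valuation

section RingDiv

variable {A F : Type*} [CommRing A] [Field F] [Algebra A F] (O : ValuationSubring F)

theorem zero_ringDiv_iff {b : A} : ringDiv O 0 b ↔ b = 0 := by
  simp [ringDiv]

theorem div_mem_iff_ringDiv (a : A) {b : A} (hb : b ≠ 0) :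
    algebraMap A F a / algebraMap A F b ∈ O ↔ ringDiv O b a := by
  simp [ringDiv, hb]

variable [FaithfulSMul A F]

theorem ringDiv_iff_valuation_le {a b : A} :
    ringDiv O a b ↔ O.valuation (algebraMap A F b) ≤ O.valuation (algebraMap A F a) := by
  rcases eq_or_ne a 0 with rfl | ha
  · simp [ringDiv]
  · have hva : 0 < O.valuation (algebraMap A F a) := by
      simpa [zero_lt_iff] using ha
    simp [ringDiv, ha, ← O.valuation_le_one_iff, div_le_one₀ hva]

theorem isDivisibility_ringDiv : IsDivisibility (ringDiv (A := A) O) := by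
  simp only [IsDivisibility, ringDiv_iff_valuation_le, map_sub, map_mul, map_zero, map_one]
  refine ⟨fun a => le_rfl, fun a b c hab hbc => hbc.trans hab, fun a b c hab hac => ?_,
    fun a b c hab => mul_le_mul_left hab _, by simp⟩
  exact (Valuation.map_sub _ _ _).trans (max_le hab hac)

theorem ringDiv_total (a b : A) : ringDiv O a b ∨ ringDiv O b a := by
  simp only [ringDiv_iff_valuation_le]
  exact le_total _ _

theorem ringDiv_of_mul_ringDiv_mul_right {a b c : A} (hc : ¬ ringDiv O 0 c)
    (h : ringDiv O (a * c) (b * c)) : ringDiv O a b := by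
  simp only [ringDiv_iff_valuation_le, map_mul, map_zero, not_le] at hc h ⊢
  exact le_of_mul_le_mul_right h hc

variable {p : ℕ}

theorem ringDiv_kochen_iff_kochenBound (a : A) {b : A} (hb : b ≠ 0) :
    ringDiv O ((p : A) * ((a ^ p * b - b ^ p * a) ^ 2 - (b ^ (p + 1)) ^ 2))
        ((a ^ p * b - b ^ p * a) * b ^ (p + 1)) ↔
      KochenBound p O ((algebraMap A F a / algebraMap A F b) ^ p
        - algebraMap A F a / algebraMap A F b) := by
  have hfb : algebraMap A F b ≠ 0 := by simpa using hb
  have hz : (algebraMap A F a / algebraMap A F b) ^ p - algebraMap A F a / algebraMap A F b =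
      algebraMap A F (a ^ p * b - b ^ p * a) / algebraMap A F (b ^ (p + 1)) := by
    rw [div_pow, div_sub_div _ _ (pow_ne_zero _ hfb) hfb]
    simp only [map_sub, map_mul, map_pow, pow_succ]
  rw [hz, kochenBound_div_iff O (by simpa using hb), ringDiv_iff_valuation_le]
  simp only [map_mul, map_sub, map_pow, map_natCast]

end RingDiv

section FractionField

variable {A F : Type*} [CommRing A] [IsDomain A] [Field F] [Algebra A F] [IsFractionRing A F]
  (O : ValuationSubring F) {p : ℕ}

theorem isPDivisibility_ringDiv_iff :
    IsPDivisibility p (ringDiv (A := A) O) ↔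
      O.valuation (p : F) < 1 ∧ ∀ z : F, KochenBound p O (z ^ p - z) := by
  have h6 : (∀ a : A, ¬ ringDiv O 0 a → ¬ ringDiv O ((p : A) * a) a) ↔
      O.valuation (p : F) < 1 := by
    simp only [ringDiv_iff_valuation_le, map_zero, map_mul, map_natCast, not_le]
    refine ⟨fun h => by simpa using h 1 (by simp), fun hvp a ha => ?_⟩
    simpa using mul_lt_mul_of_pos_right hvp ha
  have h7 : (∀ a b : A, ringDiv O ((p : A) * ((a ^ p * b - b ^ p * a) ^ 2 - (b ^ (p + 1)) ^ 2))
      ((a ^ p * b - b ^ p * a) * b ^ (p + 1))) ↔ ∀ z : F, KochenBound p O (z ^ p - z) := by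
    refine ⟨fun h z => ?_, fun h a b => ?_⟩
    · obtain ⟨a, b, hb, rfl⟩ := IsFractionRing.div_surjective (A := A) z
      exact (ringDiv_kochen_iff_kochenBound O a (nonZeroDivisors.ne_zero hb)).1 (h a b)
    · rcases eq_or_ne b 0 with rfl | hb
      · simp [ringDiv_iff_valuation_le, zero_pow (Nat.succ_ne_zero p)]
      · exact (ringDiv_kochen_iff_kochenBound O a hb).2 (h _)
  rw [IsPDivisibility, h6, h7, and_iff_right (isDivisibility_ringDiv O)]

theorem isPValuationRing_iff_isPDivisibility_ringDiv (hp : p.Prime) (hpF : (p : F) ≠ 0) :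
    IsPValuationRing p O ↔ IsPDivisibility p (ringDiv (A := A) O) := by
  rw [isPValuationRing_iff_kochenBound O hp hpF, isPDivisibility_ringDiv_iff]

theorem ringDiv_injective : Function.Injective (ringDiv (A := A) (F := F)) := by
  intro O O' h
  ext x
  obtain ⟨a, b, hb, rfl⟩ := IsFractionRing.div_surjective (A := A) x
  rw [div_mem_iff_ringDiv O a (nonZeroDivisors.ne_zero hb),
    div_mem_iff_ringDiv O' a (nonZeroDivisors.ne_zero hb), h]

end FractionField

section OfDivisibility

variable {A F : Type*} [CommRing A] [IsDomain A] [Field F] [Algebra A F] [IsFractionRing A F]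
  {D : A → A → Prop}

variable (F) in
def divValuationSubring (hD : IsDivisibility D) (htot : ∀ a b : A, D a b ∨ D b a) :
    ValuationSubring F where
  carrier := {x | ∃ a b : A, b ≠ 0 ∧ algebraMap A F a / algebraMap A F b = x ∧ D b a}
  one_mem' := ⟨1, 1, one_ne_zero, by simp, hD.1 1⟩
  zero_mem' := ⟨0, 1, one_ne_zero, by simp, hD.dvd_zero_s8 1⟩
  mul_mem' := by
    rintro _ _ ⟨a, b, hb, rfl, hba⟩ ⟨c, d, hd, rfl, hdc⟩
    exact ⟨a * c, b * d, mul_ne_zero hb hd, by simp [div_mul_div_comm], hD.mul_dvd_mul hba hdc⟩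
  add_mem' := by
    rintro _ _ ⟨a, b, hb, rfl, hba⟩ ⟨c, d, hd, rfl, hdc⟩
    refine ⟨a * d + b * c, b * d, mul_ne_zero hb hd, ?_,
      hD.dvd_add (hD.mul_dvd_mul hba (hD.1 d)) (hD.mul_dvd_mul (hD.1 b) hdc)⟩
    rw [div_add_div _ _ (by simpa using hb) (by simpa using hd)]
    simp
  neg_mem' := by
    rintro _ ⟨a, b, hb, rfl, hba⟩
    exact ⟨-a, b, hb, by simp [neg_div], hD.dvd_neg hba⟩
  mem_or_inv_mem' x := by
    obtain ⟨a, b, hb, rfl⟩ := IsFractionRing.div_surjective (A := A) x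
    have hb := nonZeroDivisors.ne_zero hb
    rcases eq_or_ne a 0 with rfl | ha
    · exact Or.inl ⟨0, b, hb, rfl, hD.dvd_zero_s8 b⟩
    rcases htot b a with hba | hab
    · exact Or.inl ⟨a, b, hb, rfl, hba⟩
    · exact Or.inr ⟨b, a, ha, (inv_div _ _).symm, hab⟩

theorem div_mem_divValuationSubring_iff (hD : IsDivisibility D) (htot : ∀ a b : A, D a b ∨ D b a)
    (hcanc : ∀ a b c : A, ¬ D 0 c → D (a * c) (b * c) → D a b) (hsupp : ∀ a : A, D 0 a → a = 0)
    (a : A) {b : A} (hb : b ≠ 0) :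
    algebraMap A F a / algebraMap A F b ∈ divValuationSubring F hD htot ↔ D b a := by
  refine ⟨fun ⟨c, d, hd, he, hdc⟩ => ?_, fun h => ⟨a, b, hb, rfl, h⟩⟩
  have hcross : c * b = a * d := by
    apply IsFractionRing.injective A F
    rw [div_eq_div_iff (by simpa using hd) (by simpa using hb)] at he
    simpa using he
  refine hcanc b a d (fun h => hd (hsupp d h)) ?_
  have hdb := hD.2.2.2.1 d c b hdc
  rwa [mul_comm d b, hcross] at hdb

theorem ringDiv_divValuationSubring_eq (hD : IsDivisibility D) (htot : ∀ a b : A, D a b ∨ D b a)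
    (hcanc : ∀ a b c : A, ¬ D 0 c → D (a * c) (b * c) → D a b) (hsupp : ∀ a : A, D 0 a → a = 0) :
    ringDiv (divValuationSubring F hD htot) = D := by
  ext a b
  rcases eq_or_ne a 0 with rfl | ha
  · rw [zero_ringDiv_iff]
    exact ⟨fun h => h ▸ hD.1 0, hsupp b⟩
  · rw [← div_mem_iff_ringDiv _ b ha, div_mem_divValuationSubring_iff hD htot hcanc hsupp b ha]

end OfDivisibility

theorem stmt_8 (p : ℕ) (hp : p.Prime) {A F : Type*} [CommRing A] [IsDomain A]
    [Algebra ℚ A] [Field F] [Algebra A F] [IsFractionRing A F] :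
    (∀ O : ValuationSubring F, IsPValuationRing p O →
      IsPDivisibility p (ringDiv (A := A) O) ∧
      (∀ a b : A, ringDiv (A := A) O a b ∨ ringDiv (A := A) O b a) ∧
      (∀ a b c : A, ¬ ringDiv (A := A) O 0 c → ringDiv (A := A) O (a * c) (b * c) →
        ringDiv (A := A) O a b) ∧
      (∀ a : A, ringDiv (A := A) O 0 a → a = 0)) ∧
    (∀ D : A → A → Prop, IsPDivisibility p D → (∀ a b : A, D a b ∨ D b a) →
      (∀ a b c : A, ¬ D 0 c → D (a * c) (b * c) → D a b) →
      (∀ a : A, D 0 a → a = 0) →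
      ∃! O : ValuationSubring F, IsPValuationRing p O ∧
        ∀ a b : A, D a b ↔ ringDiv (A := A) O a b) := by
  have : CharZero A := charZero_of_injective_algebraMap (algebraMap ℚ A).injective
  have : CharZero F := charZero_of_injective_algebraMap (IsFractionRing.injective A F)
  have hpF : (p : F) ≠ 0 := Nat.cast_ne_zero.2 hp.ne_zero
  refine ⟨fun O hO => ?_, fun D hD htot hcanc hsupp => ?_⟩
  · exact ⟨(isPValuationRing_iff_isPDivisibility_ringDiv O hp hpF).1 hO, ringDiv_total O,
      fun a b c => ringDiv_of_mul_ringDiv_mul_right O, fun a => (zero_ringDiv_iff O).1⟩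
  · have hD_eq := ringDiv_divValuationSubring_eq (F := F) hD.1 htot hcanc hsupp
    refine ⟨divValuationSubring F hD.1 htot, ⟨?_, by simp [hD_eq]⟩, ?_⟩
    · rw [isPValuationRing_iff_isPDivisibility_ringDiv (A := A) _ hp hpF, hD_eq]
      exact hD
    · rintro O ⟨-, hO⟩
      refine ringDiv_injective (A := A) ?_
      ext a b
      rw [← hO, hD_eq]
end

section
/- Let |' be a p-divisibility on a commutative ring A with ℚ ⊆ A, and let | be a maximal element (under inclusion) among p-divisibilities extending |'. Then | admits cancellation: for all a, b, c ∈ A with 0∤c, ac|bc implies a|b. -/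
/-!
For `0 ∤ c` the relation `a ∣ᶜ b :↔ ac ∣ bc` is again a p-divisibility, and it contains `∣`
(multiply by `c`), hence `∣'`. Maximality of `∣` forces `∣ᶜ ⊆ ∣`, which is cancellation by `c`.
-/

section

variable {A : Type*} [CommRing A]

def scaleRel (D : A → A → Prop) (c : A) : A → A → Prop :=
  fun a b => D (a * c) (b * c)

theorem IsDivisibility.le_scaleRel {D : A → A → Prop} (hD : IsDivisibility D) (c : A)
    {a b : A} (h : D a b) : scaleRel D c a b :=
  hD.2.2.2.1 a b c h

theorem IsDivisibility.scaleRel {D : A → A → Prop} (hD : IsDivisibility D) {c : A}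
    (hc : ¬ D 0 c) : IsDivisibility (scaleRel D c) := by
  obtain ⟨hrefl, htrans, hsub, hmul, -⟩ := hD
  refine ⟨fun a => hrefl _, fun a b d => htrans _ _ _, fun a b d h₁ h₂ => ?_,
    fun a b d h => ?_, ?_⟩
  · simpa only [_root_.scaleRel, sub_mul] using hsub _ _ _ h₁ h₂
  · simpa only [_root_.scaleRel, mul_right_comm _ d c] using hmul _ _ d h
  · simpa only [_root_.scaleRel, zero_mul, one_mul] using hc

theorem IsPDivisibility.scaleRel {p : ℕ} {D : A → A → Prop} (hD : IsPDivisibility p D)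
    {c : A} (hc : ¬ D 0 c) : IsPDivisibility p (scaleRel D c) := by
  obtain ⟨hdiv, h₆, h₇⟩ := hD
  refine ⟨hdiv.scaleRel hc, fun a ha h => ?_, fun a b => hdiv.le_scaleRel c (h₇ a b)⟩
  refine h₆ (a * c) (by simpa only [_root_.scaleRel, zero_mul] using ha) ?_
  simpa only [_root_.scaleRel, mul_assoc] using h

end

theorem stmt_12_general (p : ℕ) {A : Type*} [CommRing A]
    (D' D : A → A → Prop) (hD : IsPDivisibility p D)
    (hext : ∀ a b : A, D' a b → D a b)
    (hmax : ∀ E : A → A → Prop, IsPDivisibility p E → (∀ a b : A, D' a b → E a b) →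
      (∀ a b : A, D a b → E a b) → ∀ a b : A, E a b → D a b) :
    ∀ a b c : A, ¬ D 0 c → D (a * c) (b * c) → D a b := by
  intro a b c hc habc
  have hle : ∀ a b : A, D a b → scaleRel D c a b := fun _ _ => hD.1.le_scaleRel c
  exact hmax (scaleRel D c) (hD.scaleRel hc) (fun x y h => hle x y (hext x y h)) hle a b habc

theorem stmt_12 (p : ℕ) (hp : p.Prime) {A : Type*} [CommRing A] [Algebra ℚ A]
    (D' D : A → A → Prop) (hD' : IsPDivisibility p D') (hD : IsPDivisibility p D)
    (hext : ∀ a b : A, D' a b → D a b)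
    (hmax : ∀ E : A → A → Prop, IsPDivisibility p E → (∀ a b : A, D' a b → E a b) →
      (∀ a b : A, D a b → E a b) → ∀ a b : A, E a b → D a b) :
    ∀ a b c : A, ¬ D 0 c → D (a * c) (b * c) → D a b :=
  stmt_12_general p D' D hD hext hmax
end

section
/- Let X be a compact topological space, C(X, ℚ_p) the ring of continuous ℚ_p-valued functions, and q a prime different from p. Then for all f, g ∈ C(X, ℚ_p): v_p(g(x)) ≤ v_p(f(x)) for all x ∈ X if and only if there exists h ∈ C(X, ℚ_p) with h^q = g^q + p·f^q. -/
/-!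
In `ℚ_[p]` the condition on `f` and `g` says `‖f x‖ ≤ ‖g x‖`. Under it, `g^q + p f^q = g^q (1 + t)`
with `‖t‖ < 1` wherever `g ≠ 0`, and since `q` is a unit of `ℤ_[p]`, Hensel's lemma gives a root
`h x` with `‖h x - g x‖ < ‖g x‖`. This choice is continuous: on the ball `‖a - b‖ < ‖b‖` the map
`a ↦ a^q` multiplies distances to `b` by exactly `‖b‖^(q-1)`, so `h` inherits the continuity of
`h^q`, while near the zeros of `g` one has `‖h‖ = ‖g‖ → 0`.
Conversely, if `‖g x‖ < ‖f x‖` then `‖g x‖ ≤ ‖f x‖ / p` by discreteness of the norm, so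
`h(x)^q` would have the valuation `1 + q v(f x)` of `p f(x)^q`, which is not divisible by `q`.
-/

open Filter Topology

theorem IsUltrametricDist.norm_add_eq_left_of_lt {G : Type*} [SeminormedAddGroup G]
    [IsUltrametricDist G] {x y : G} (h : ‖y‖ < ‖x‖) : ‖x + y‖ = ‖x‖ := by
  rw [IsUltrametricDist.norm_add_eq_max_of_norm_ne_norm h.ne', max_eq_left h.le]

theorem ne_zero_of_norm_natCast_eq_one {R : Type*} [SeminormedRing R] {q : ℕ}
    (hq : ‖(q : R)‖ = 1) : q ≠ 0 := by
  rintro rfl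
  simp at hq

section Ultrametric

variable {K : Type*} [NormedField K] [IsUltrametricDist K]

theorem norm_one_add_pow_sub_one {q : ℕ} (hq : ‖(q : K)‖ = 1) {e : K} (he : ‖e‖ < 1) :
    ‖(1 + e) ^ q - 1‖ = ‖e‖ := by
  obtain ⟨n, rfl⟩ := Nat.exists_eq_add_one_of_ne_zero (ne_zero_of_norm_natCast_eq_one hq)
  rcases eq_or_ne e 0 with rfl | he0
  · simp
  have hexpand : (1 + e) ^ (n + 1) - 1 =
      (n + 1 : ℕ) * e + ∑ m ∈ Finset.range n, e ^ (m + 2) * ((n + 1).choose (m + 2) : K) := by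
    rw [add_comm, add_pow, Finset.sum_range_succ', Finset.sum_range_succ']
    simp only [Nat.reduceSubDiff, one_pow, mul_one, zero_add, pow_one, add_tsub_cancel_right,
      Nat.choose_one_right, pow_zero, tsub_zero, Nat.choose_zero_right]
    ring
  have hhigher : ‖∑ m ∈ Finset.range n, e ^ (m + 2) * ((n + 1).choose (m + 2) : K)‖ < ‖e‖ := by
    refine (IsUltrametricDist.norm_sum_le_of_forall_le_of_nonneg (sq_nonneg ‖e‖)
      fun m _ => ?_).trans_lt ?_
    · rw [norm_mul, norm_pow, pow_add]
      calc ‖e‖ ^ m * ‖e‖ ^ 2 * ‖((n + 1).choose (m + 2) : K)‖ ≤ 1 * ‖e‖ ^ 2 * 1 := by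
            gcongr
            · exact pow_le_one₀ (norm_nonneg e) he.le
            · exact IsUltrametricDist.norm_natCast_le_one K _
        _ = ‖e‖ ^ 2 := by ring
    · simpa [sq] using mul_lt_of_lt_one_left (norm_pos_iff.2 he0) he
  rw [hexpand, IsUltrametricDist.norm_add_eq_left_of_lt, norm_mul, hq, one_mul]
  rwa [norm_mul, hq, one_mul]

theorem norm_pow_sub_pow_of_norm_sub_lt {q : ℕ} (hq : ‖(q : K)‖ = 1) {a b : K}
    (h : ‖a - b‖ < ‖b‖) : ‖a ^ q - b ^ q‖ = ‖a - b‖ * ‖b‖ ^ (q - 1) := by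
  have hb : b ≠ 0 := norm_pos_iff.1 ((norm_nonneg _).trans_lt h)
  have he : ‖(a - b) / b‖ < 1 := by rwa [norm_div, div_lt_one (norm_pos_iff.2 hb)]
  have hab : a ^ q - b ^ q = b ^ q * ((1 + (a - b) / b) ^ q - 1) := by
    rw [show 1 + (a - b) / b = a / b by field_simp; ring, div_pow, mul_sub,
      mul_div_cancel₀ _ (pow_ne_zero q hb), mul_one]
  obtain ⟨n, rfl⟩ := Nat.exists_eq_add_one_of_ne_zero (ne_zero_of_norm_natCast_eq_one hq)
  rw [hab, norm_mul, norm_one_add_pow_sub_one hq he, norm_pow, norm_div, Nat.add_sub_cancel,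
    pow_succ]
  field_simp

theorem continuous_of_continuous_pow_of_norm_sub_lt {X : Type*} [TopologicalSpace X] {q : ℕ}
    (hq : ‖(q : K)‖ = 1) {g h : X → K} (hhq : Continuous fun x => h x ^ q) (hg : Continuous g)
    (hclose : ∀ x, ‖h x - g x‖ < ‖g x‖ ∨ h x = g x) : Continuous h := by
  have hnorm (x : X) : ‖h x‖ = ‖g x‖ := by
    rcases hclose x with hlt | heq
    · simpa using IsUltrametricDist.norm_add_eq_left_of_lt hlt
    · rw [heq]
  refine continuous_iff_continuousAt.2 fun x₀ => ?_
  have hg₀ := tendsto_iff_norm_sub_tendsto_zero.1 (hg.tendsto x₀)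
  rw [ContinuousAt, tendsto_iff_norm_sub_tendsto_zero]
  rcases eq_or_ne (g x₀) 0 with hgx₀ | hgx₀
  · have hhx₀ : h x₀ = 0 := norm_eq_zero.1 (by rw [hnorm, hgx₀, norm_zero])
    simpa [hhx₀, hgx₀, hnorm] using hg₀
  set B := ‖g x₀‖
  have hB : 0 < B := norm_pos_iff.2 hgx₀
  have hlt_B {x : X} (hx : ‖g x‖ = B) : ‖h x - g x‖ < B := by
    rcases hclose x with hlt | heq
    · rwa [← hx]
    · rwa [heq, sub_self, norm_zero]
  have hnear : ∀ᶠ x in 𝓝 x₀, ‖h x - h x₀‖ < B := by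
    filter_upwards [hg₀.eventually (gt_mem_nhds hB)] with x hx
    have hgx : ‖g x‖ = B := by simpa using IsUltrametricDist.norm_add_eq_left_of_lt hx
    calc ‖h x - h x₀‖ = ‖(h x - g x) + (g x - g x₀) + (g x₀ - h x₀)‖ := by ring_nf
      _ < B := by
        refine (IsUltrametricDist.norm_add_le_max _ _).trans_lt (max_lt ?_ ?_)
        · exact (IsUltrametricDist.norm_add_le_max _ _).trans_lt (max_lt (hlt_B hgx) hx)
        · rw [norm_sub_rev]; exact hlt_B rfl
  have hlip : ∀ᶠ x in 𝓝 x₀, ‖h x ^ q - h x₀ ^ q‖ / B ^ (q - 1) = ‖h x - h x₀‖ := by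
    filter_upwards [hnear] with x hx
    rw [norm_pow_sub_pow_of_norm_sub_lt hq (by rwa [hnorm]), hnorm,
      mul_div_cancel_right₀ _ (pow_pos hB _).ne']
  refine Tendsto.congr' hlip ?_
  simpa using (tendsto_iff_norm_sub_tendsto_zero.1 (hhq.tendsto x₀)).div_const (B ^ (q - 1))

end Ultrametric

namespace Padic

variable {p : ℕ} [Fact p.Prime]

theorem eq_zero_or_valuation_le_iff_norm_le {a b : ℚ_[p]} :
    (a = 0 ∨ (b ≠ 0 ∧ b.valuation ≤ a.valuation)) ↔ ‖a‖ ≤ ‖b‖ := by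
  rcases eq_or_ne a 0 with rfl | ha
  · simp
  have hp : (1 : ℝ) < p := mod_cast (Fact.out : p.Prime).one_lt
  have hiff (hb : b ≠ 0) : ‖a‖ ≤ ‖b‖ ↔ b.valuation ≤ a.valuation := by
    rw [norm_eq_zpow_neg_valuation ha, norm_eq_zpow_neg_valuation hb,
      zpow_le_zpow_iff_right₀ hp, neg_le_neg_iff]
  have hb_of_le (hle : ‖a‖ ≤ ‖b‖) : b ≠ 0 := norm_pos_iff.1 ((norm_pos_iff.2 ha).trans_le hle)
  simp only [ha, false_or]
  exact ⟨fun ⟨hb, hv⟩ => (hiff hb).2 hv, fun hle => ⟨hb_of_le hle, (hiff (hb_of_le hle)).1 hle⟩⟩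

theorem norm_le_inv_mul_of_norm_lt {a b : ℚ_[p]} (h : ‖b‖ < ‖a‖) : ‖b‖ ≤ (p : ℝ)⁻¹ * ‖a‖ := by
  have ha : a ≠ 0 := norm_pos_iff.1 ((norm_nonneg b).trans_lt h)
  rw [norm_eq_zpow_neg_valuation ha, norm_lt_pow_iff_norm_le_pow_sub_one] at h
  rwa [norm_eq_zpow_neg_valuation ha, mul_comm,
    ← zpow_sub_one₀ (by exact_mod_cast (Fact.out : p.Prime).ne_zero)]

theorem norm_pow_ne_norm_p_mul_pow {q : ℕ} (hq : 1 < q) {a : ℚ_[p]} (ha : a ≠ 0) (z : ℚ_[p]) :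
    ‖z ^ q‖ ≠ ‖(p : ℚ_[p]) * a ^ q‖ := by
  intro h
  have hz : z ≠ 0 := by
    rintro rfl
    simp [zero_pow (by omega : q ≠ 0), ha, (Fact.out : p.Prime).ne_zero] at h
  have hp : (1 : ℝ) < p := mod_cast (Fact.out : p.Prime).one_lt
  have hp0 : (p : ℚ_[p]) ≠ 0 := by exact_mod_cast (Fact.out : p.Prime).ne_zero
  rw [norm_eq_zpow_neg_valuation (pow_ne_zero q hz),
    norm_eq_zpow_neg_valuation (mul_ne_zero hp0 (pow_ne_zero q ha)),
    zpow_right_inj₀ (by linarith) hp.ne', neg_inj, valuation_mul hp0 (pow_ne_zero q ha),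
    valuation_p, valuation_pow, valuation_pow] at h
  have : (q : ℤ) = 1 :=
    Int.eq_one_of_dvd_one (by positivity) ⟨z.valuation - a.valuation, by linarith⟩
  omega

theorem exists_pow_eq_one_add {q : ℕ} (hq : ‖(q : ℚ_[p])‖ = 1) {t : ℚ_[p]} (ht : ‖t‖ < 1) :
    ∃ w : ℚ_[p], w ^ q = 1 + t ∧ ‖w - 1‖ < 1 := by
  let t' : ℤ_[p] := ⟨t, ht.le⟩
  let F : Polynomial ℤ_[p] := .X ^ q - .C (1 + t')
  have hF : F.aeval (1 : ℤ_[p]) = -t' := by simp [F]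
  have hF' : ‖F.derivative.aeval (1 : ℤ_[p])‖ = 1 := by
    simpa [F, Polynomial.derivative_X_pow, PadicInt.norm_def] using hq
  obtain ⟨z, hz, hz1, -⟩ := hensels_lemma (F := F) (a := 1) (by rwa [hF, hF', norm_neg, one_pow])
  refine ⟨z, ?_, ?_⟩
  · have : z ^ q = 1 + t' := sub_eq_zero.1 (by simpa [F] using hz)
    simpa using congrArg ((↑) : ℤ_[p] → ℚ_[p]) this
  · rw [hF'] at hz1
    exact_mod_cast hz1

theorem exists_pow_eq_add_p_mul_pow {q : ℕ} (hq : ‖(q : ℚ_[p])‖ = 1) {a b : ℚ_[p]}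
    (hab : ‖a‖ ≤ ‖b‖) : ∃ z : ℚ_[p], z ^ q = b ^ q + p * a ^ q ∧ (‖z - b‖ < ‖b‖ ∨ z = b) := by
  rcases eq_or_ne a 0 with rfl | ha
  · exact ⟨b, by simp [zero_pow (ne_zero_of_norm_natCast_eq_one hq)], .inr rfl⟩
  have hb : b ≠ 0 := norm_pos_iff.1 ((norm_pos_iff.2 ha).trans_le hab)
  have ht : ‖(p : ℚ_[p]) * (a / b) ^ q‖ < 1 := by
    rw [norm_mul, norm_p, norm_pow, norm_div]
    calc (p : ℝ)⁻¹ * (‖a‖ / ‖b‖) ^ q ≤ (p : ℝ)⁻¹ * 1 := by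
          gcongr
          exact pow_le_one₀ (by positivity) (div_le_one_of_le₀ hab (norm_nonneg b))
      _ < 1 := by
          rw [mul_one]
          exact inv_lt_one_of_one_lt₀ (mod_cast (Fact.out : p.Prime).one_lt)
  obtain ⟨w, hw, hw1⟩ := exists_pow_eq_one_add hq ht
  refine ⟨b * w, ?_, .inl ?_⟩
  · rw [mul_pow, hw, div_pow]
    field_simp
  · rw [← mul_sub_one, norm_mul]
    exact mul_lt_of_lt_one_right (norm_pos_iff.2 hb) hw1

theorem norm_le_of_pow_eq_add_p_mul_pow {q : ℕ} (hq : 1 < q) {a b z : ℚ_[p]}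
    (h : z ^ q = b ^ q + p * a ^ q) : ‖a‖ ≤ ‖b‖ := by
  by_contra! hlt
  have ha : a ≠ 0 := norm_pos_iff.1 ((norm_nonneg b).trans_lt hlt)
  have hp : (1 : ℝ) < p := mod_cast (Fact.out : p.Prime).one_lt
  have hsmall : ‖b ^ q‖ < ‖(p : ℚ_[p]) * a ^ q‖ := by
    rw [norm_mul, norm_p, norm_pow, norm_pow]
    calc ‖b‖ ^ q ≤ ((p : ℝ)⁻¹ * ‖a‖) ^ q := by gcongr; exact norm_le_inv_mul_of_norm_lt hlt
      _ = (p : ℝ)⁻¹ ^ q * ‖a‖ ^ q := mul_pow _ _ _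
      _ < (p : ℝ)⁻¹ * ‖a‖ ^ q := by
        gcongr
        exact pow_lt_self_of_lt_one₀ (inv_pos.2 (by linarith)) (inv_lt_one_of_one_lt₀ hp) hq
  refine norm_pow_ne_norm_p_mul_pow hq ha z ?_
  rw [h, add_comm, IsUltrametricDist.norm_add_eq_left_of_lt hsmall]

end Padic

theorem stmt_17_general (p q : ℕ) [Fact p.Prime] (hq : q.Prime) (hpq : p ≠ q)
    {X : Type*} [TopologicalSpace X]
    (f g : C(X, ℚ_[p])) :
    (∀ x : X, f x = 0 ∨ (g x ≠ 0 ∧ (g x).valuation ≤ (f x).valuation)) ↔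
    ∃ h : C(X, ℚ_[p]), h ^ q = g ^ q + (p : C(X, ℚ_[p])) * f ^ q := by
  have hqp : ‖(q : ℚ_[p])‖ = 1 :=
    Padic.norm_natCast_eq_one_iff.2 ((Nat.coprime_primes Fact.out hq).2 hpq)
  simp only [Padic.eq_zero_or_valuation_le_iff_norm_le]
  constructor
  · intro hfg
    choose h hpow hclose using fun x => Padic.exists_pow_eq_add_p_mul_pow hqp (hfg x)
    have hcont : Continuous h := continuous_of_continuous_pow_of_norm_sub_lt hqp
      (by simp only [hpow]; fun_prop) g.continuous hclose
    exact ⟨⟨h, hcont⟩, by ext x; simp [hpow]⟩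
  · rintro ⟨h, hh⟩ x
    exact Padic.norm_le_of_pow_eq_add_p_mul_pow hq.one_lt (by simpa using congr($hh x))

theorem stmt_17 (p q : ℕ) [Fact p.Prime] (hq : q.Prime) (hpq : p ≠ q)
    {X : Type*} [TopologicalSpace X] [CompactSpace X] [T2Space X]
    (f g : C(X, ℚ_[p])) :
    (∀ x : X, f x = 0 ∨ (g x ≠ 0 ∧ (g x).valuation ≤ (f x).valuation)) ↔
    ∃ h : C(X, ℚ_[p]), h ^ q = g ^ q + (p : C(X, ℚ_[p])) * f ^ q :=
  stmt_17_general p q hq hpq f g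
end
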